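/- arXiv:2011.14967 — 2 statements merged into one kernel-verified Lean document; each statement's English description precedes it below -/
import Mathlib

section
/- Let L, L′ ⊆ ℝ^n be lines with positive slope such that L ∼_C̄ L′. Define σ : push_L(C̄) → push_{L′}(C̄) by σ(d) = push_{L′}(d̄), where d̄ is the greatest element of {c ∈ C̄ : c ≼ d} (nonempty since any c ∈ C̄ with push_L(c) = d satisfies c ≼ d). Then: (i) for every d ∈ push_L(C̄) and every c ∈ C̄ with push_L(c) = d, one has push_{L′}(c) = σ(d), so σ(d) = push_{L′}(push_L^{-1}(d)) is well defined; (ii) σ is a bijection from push_L(C̄) onto push_{L′}(C̄); and (iii) σ is order-preserving: if d, e ∈ push_L(C̄) with d ≼ e, then σ(d) ≼ σ(e). -/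
/-!
A point of a line with positive slope is determined by any one of its coordinates. If `u ≼ v`
in `C̄` have the same `L`-push `x`, pick `i ∈ A^L_u`: then `u_i = x_i ≥ v_i ≥ u_i`, so `v_i = u_i`
and `i ∈ A^L_v`. As `L ∼_C̄ L'`, the `L'`-pushes of `u` and `v` both have `i`-th coordinate `u_i`,
hence coincide; by symmetry, comparable elements of `C̄` have equal `L`-pushes iff they have equal
`L'`-pushes. Everything else is order theory of push maps: `push_L(d̄) = d`, so (i) is the
comparable case `c ≼ d̄`, and injectivity reduces to the comparable pairs `d̄, ē ≼ d̄ ⊔ ē ∈ C̄`.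
-/

/-- `L ⊆ ℝⁿ` is a line with positive slope: `L = {u₀ + t·m : t ∈ ℝ}` with all
coordinates of the velocity vector `m` positive. -/
def PosLine {n : ℕ} (L : Set (Fin n → ℝ)) : Prop :=
  ∃ u₀ m : Fin n → ℝ, (∀ i, 0 < m i) ∧ L = {x | ∃ t : ℝ, x = u₀ + t • m}

/-- For `∅ ≠ A ⊆ {1,…,n}`, the open face
`S_A(u) = {x : x_i = u_i for i ∈ A, x_j > u_j for j ∉ A}` of the boundary of
the positive cone of `u`. -/
def SFace {n : ℕ} (A : Finset (Fin n)) (u : Fin n → ℝ) : Set (Fin n → ℝ) :=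
  {x | (∀ i ∈ A, x i = u i) ∧ ∀ j ∉ A, u j < x j}

variable {α : Type*}

def IsPushMap [Preorder α] (M : Set α) (P : α → α) : Prop :=
  ∀ w, IsLeast {x | x ∈ M ∧ w ≤ x} (P w)

namespace IsPushMap

variable [PartialOrder α] {M : Set α} {P : α → α}

lemma mem (hP : IsPushMap M P) (w : α) : P w ∈ M := (hP w).1.1

lemma le_apply (hP : IsPushMap M P) (w : α) : w ≤ P w := (hP w).1.2

lemma apply_le (hP : IsPushMap M P) {w x : α} (hx : x ∈ M) (hwx : w ≤ x) : P w ≤ x :=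
  (hP w).2 ⟨hx, hwx⟩

lemma monotone (hP : IsPushMap M P) : Monotone P := fun _ w' h =>
  hP.apply_le (hP.mem w') (h.trans (hP.le_apply w'))

lemma apply_eq_of_le_of_le (hP : IsPushMap M P) {w w' : α} (h : w ≤ w') (h' : w' ≤ P w) :
    P w' = P w :=
  le_antisymm (hP.apply_le (hP.mem w) h') (hP.monotone h)

end IsPushMap

section PartialOrder

variable [PartialOrder α] {M M' C : Set α} {P P' bar : α → α}

lemma le_bar_apply (hP : IsPushMap M P)
    (hbar : ∀ d ∈ P '' C, IsGreatest {c | c ∈ C ∧ c ≤ d} (bar d)) {c : α} (hc : c ∈ C) :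
    c ≤ bar (P c) :=
  (hbar _ ⟨c, hc, rfl⟩).2 ⟨hc, hP.le_apply c⟩

lemma apply_bar (hP : IsPushMap M P)
    (hbar : ∀ d ∈ P '' C, IsGreatest {c | c ∈ C ∧ c ≤ d} (bar d)) {d : α} (hd : d ∈ P '' C) :
    P (bar d) = d := by
  obtain ⟨c, hc, rfl⟩ := hd
  exact hP.apply_eq_of_le_of_le (le_bar_apply hP hbar hc) (hbar _ ⟨c, hc, rfl⟩).1.2

lemma apply_bar_apply (hP : IsPushMap M P)
    (hbar : ∀ d ∈ P '' C, IsGreatest {c | c ∈ C ∧ c ≤ d} (bar d))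
    (hcompat : ∀ u ∈ C, ∀ v ∈ C, u ≤ v → P u = P v → P' u = P' v) {c : α} (hc : c ∈ C) :
    P' (bar (P c)) = P' c := by
  have hd : P c ∈ P '' C := ⟨c, hc, rfl⟩
  exact (hcompat c hc _ (hbar _ hd).1.1 (le_bar_apply hP hbar hc)
    (apply_bar hP hbar hd).symm).symm

lemma monotoneOn_comp_bar (hP' : IsPushMap M' P')
    (hbar : ∀ d ∈ P '' C, IsGreatest {c | c ∈ C ∧ c ≤ d} (bar d)) :
    MonotoneOn (fun d => P' (bar d)) (P '' C) := by
  intro d hd e he hde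
  exact hP'.monotone ((hbar e he).2 ⟨(hbar d hd).1.1, (hbar d hd).1.2.trans hde⟩)

end PartialOrder

section SemilatticeSup

variable [SemilatticeSup α] {M M' C : Set α} {P P' bar : α → α}

lemma injOn_comp_bar (hP : IsPushMap M P) (hP' : IsPushMap M' P') (hC : SupClosed C)
    (hbar : ∀ d ∈ P '' C, IsGreatest {c | c ∈ C ∧ c ≤ d} (bar d))
    (hcompat : ∀ u ∈ C, ∀ v ∈ C, u ≤ v → P' u = P' v → P u = P v) :
    Set.InjOn (fun d => P' (bar d)) (P '' C) := by
  intro d hd e he (hde : P' (bar d) = P' (bar e))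
  have hdC := (hbar d hd).1.1
  have heC := (hbar e he).1.1
  have hw : P' (bar d ⊔ bar e) = P' (bar d) :=
    hP'.apply_eq_of_le_of_le le_sup_left
      (sup_le (hP'.le_apply _) (hde ▸ hP'.le_apply _))
  have hd' := hcompat _ hdC _ (hC hdC heC) le_sup_left hw.symm
  have he' := hcompat _ heC _ (hC hdC heC) le_sup_right (hw.trans hde).symm
  rw [← apply_bar hP hbar hd, ← apply_bar hP hbar he, hd', he']

lemma bijOn_comp_bar (hP : IsPushMap M P) (hP' : IsPushMap M' P') (hC : SupClosed C)
    (hbar : ∀ d ∈ P '' C, IsGreatest {c | c ∈ C ∧ c ≤ d} (bar d))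
    (hcompat : ∀ u ∈ C, ∀ v ∈ C, u ≤ v → (P u = P v ↔ P' u = P' v)) :
    Set.BijOn (fun d => P' (bar d)) (P '' C) (P' '' C) := by
  refine ⟨fun d hd => ⟨bar d, (hbar d hd).1.1, rfl⟩,
    injOn_comp_bar hP hP' hC hbar fun u hu v hv huv => (hcompat u hu v hv huv).2, ?_⟩
  rintro _ ⟨c, hc, rfl⟩
  exact ⟨P c, ⟨c, hc, rfl⟩,
    apply_bar_apply hP hbar (fun u hu v hv huv => (hcompat u hu v hv huv).1) hc⟩

end SemilatticeSup

lemma SFace.le_of_mem {n : ℕ} {A : Finset (Fin n)} {u x : Fin n → ℝ} (hx : x ∈ SFace A u) :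
    u ≤ x := fun j => by
  by_cases hj : j ∈ A
  · exact (hx.1 j hj).ge
  · exact (hx.2 j hj).le

lemma SFace.mem_and_apply_eq {n : ℕ} {A B : Finset (Fin n)} {u v x : Fin n → ℝ}
    (huv : u ≤ v) (hxu : x ∈ SFace A u) (hxv : x ∈ SFace B v) {i : Fin n} (hi : i ∈ A) :
    i ∈ B ∧ v i = u i := by
  have hvi : v i = u i := le_antisymm ((SFace.le_of_mem hxv i).trans (hxu.1 i hi).le) (huv i)
  refine ⟨by_contra fun hiB => ?_, hvi⟩
  exact (hxv.2 i hiB).ne (by rw [hxu.1 i hi, hvi])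

lemma PosLine.eq_of_apply_eq {n : ℕ} {M : Set (Fin n → ℝ)} (hM : PosLine M)
    {x y : Fin n → ℝ} (hx : x ∈ M) (hy : y ∈ M) {i : Fin n} (h : x i = y i) : x = y := by
  obtain ⟨u₀, m, hm, rfl⟩ := hM
  obtain ⟨t, rfl⟩ := hx
  obtain ⟨s, rfl⟩ := hy
  have hts : t = s := by
    simp only [Pi.add_apply, Pi.smul_apply, smul_eq_mul, add_right_inj] at h
    exact mul_right_cancel₀ (hm i).ne' h
  rw [hts]

lemma PosLine.push_eq_of_mem_sFace {n : ℕ} {M : Set (Fin n → ℝ)} (hM : PosLine M)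
    {P : (Fin n → ℝ) → (Fin n → ℝ)} (hP : IsPushMap M P) {A B : Finset (Fin n)}
    {u v x : Fin n → ℝ} (hA : A.Nonempty) (huv : u ≤ v)
    (hxu : x ∈ SFace A u) (hxv : x ∈ SFace B v) (hPu : P u ∈ SFace A u) (hPv : P v ∈ SFace B v) :
    P u = P v := by
  obtain ⟨i, hi⟩ := hA
  obtain ⟨hiB, hvi⟩ := SFace.mem_and_apply_eq huv hxu hxv hi
  exact hM.eq_of_apply_eq (hP.mem u) (hP.mem v) (by rw [hPu.1 i hi, hPv.1 i hiB, hvi])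

theorem stmt_14_general {n : ℕ} (L L' : Set (Fin n → ℝ))
    (hL : PosLine L) (hL' : PosLine L')
    (Cbar : Finset (Fin n → ℝ))
    (hclosed : ∀ a ∈ Cbar, ∀ b ∈ Cbar, a ⊔ b ∈ Cbar)
    (pushL pushL' : (Fin n → ℝ) → (Fin n → ℝ))
    (hpush : ∀ w : Fin n → ℝ, IsLeast {x | x ∈ L ∧ w ≤ x} (pushL w))
    (hpush' : ∀ w : Fin n → ℝ, IsLeast {x | x ∈ L' ∧ w ≤ x} (pushL' w))
    (AL AL' : (Fin n → ℝ) → Finset (Fin n))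
    (hAL : ∀ w : Fin n → ℝ, (AL w).Nonempty ∧ pushL w ∈ SFace (AL w) w)
    (hAL' : ∀ w : Fin n → ℝ, (AL' w).Nonempty ∧ pushL' w ∈ SFace (AL' w) w)
    (hequiv : ∀ c ∈ Cbar, AL c = AL' c)
    (bar : (Fin n → ℝ) → (Fin n → ℝ))
    (hbar : ∀ d ∈ pushL '' (↑Cbar : Set (Fin n → ℝ)),
      IsGreatest {c | c ∈ Cbar ∧ c ≤ d} (bar d)) :
    (∀ c ∈ Cbar, pushL' c = pushL' (bar (pushL c))) ∧
    Set.BijOn (fun d => pushL' (bar d)) (pushL '' (↑Cbar : Set (Fin n → ℝ)))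
      (pushL' '' (↑Cbar : Set (Fin n → ℝ))) ∧
    (∀ d ∈ pushL '' (↑Cbar : Set (Fin n → ℝ)),
      ∀ e ∈ pushL '' (↑Cbar : Set (Fin n → ℝ)),
        d ≤ e → pushL' (bar d) ≤ pushL' (bar e)) := by
  have hfaceL' : ∀ c ∈ Cbar, pushL' c ∈ SFace (AL c) c :=
    fun c hc => hequiv c hc ▸ (hAL' c).2
  have hfaceL : ∀ c ∈ Cbar, pushL c ∈ SFace (AL' c) c :=
    fun c hc => (hequiv c hc).symm ▸ (hAL c).2
  have hcompat : ∀ u ∈ (Cbar : Set (Fin n → ℝ)), ∀ v ∈ (Cbar : Set (Fin n → ℝ)), u ≤ v →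
      (pushL u = pushL v ↔ pushL' u = pushL' v) := fun u hu v hv huv =>
    ⟨fun h => hL'.push_eq_of_mem_sFace hpush' (hAL u).1 huv (hAL u).2 (h ▸ (hAL v).2)
        (hfaceL' u hu) (hfaceL' v hv),
      fun h => hL.push_eq_of_mem_sFace hpush (hAL' u).1 huv (hAL' u).2 (h ▸ (hAL' v).2)
        (hfaceL u hu) (hfaceL v hv)⟩
  refine ⟨fun c hc => ?_, bijOn_comp_bar hpush hpush' hclosed hbar hcompat,
    monotoneOn_comp_bar hpush' hbar⟩
  exact (apply_bar_apply hpush hbar (fun u hu v hv huv => (hcompat u hu v hv huv).1) hc).symm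

/-- let `L ∼_C̄ L'` be equivalent lines with positive slope and
define `σ(d) = push_{L'}(d̄)` for `d ∈ push_L(C̄)`, where `d̄` is the greatest
element of `{c ∈ C̄ : c ≼ d}`. Then (i) `push_{L'}(c) = σ(d)` for every
`c ∈ C̄` with `push_L(c) = d` (so `σ = push_{L'} ∘ push_L⁻¹` is well defined);
(ii) `σ` is a bijection from `push_L(C̄)` onto `push_{L'}(C̄)`; and (iii) `σ`
is order preserving. -/
theorem stmt_14 {n : ℕ} (hn : 0 < n) (L L' : Set (Fin n → ℝ))
    (hL : PosLine L) (hL' : PosLine L')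
    (Cbar : Finset (Fin n → ℝ)) (hCne : Cbar.Nonempty)
    (hclosed : ∀ a ∈ Cbar, ∀ b ∈ Cbar, a ⊔ b ∈ Cbar)
    (pushL pushL' : (Fin n → ℝ) → (Fin n → ℝ))
    (hpush : ∀ w : Fin n → ℝ, IsLeast {x | x ∈ L ∧ w ≤ x} (pushL w))
    (hpush' : ∀ w : Fin n → ℝ, IsLeast {x | x ∈ L' ∧ w ≤ x} (pushL' w))
    (AL AL' : (Fin n → ℝ) → Finset (Fin n))
    (hAL : ∀ w : Fin n → ℝ, (AL w).Nonempty ∧ pushL w ∈ SFace (AL w) w)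
    (hAL' : ∀ w : Fin n → ℝ, (AL' w).Nonempty ∧ pushL' w ∈ SFace (AL' w) w)
    (hequiv : ∀ c ∈ Cbar, AL c = AL' c)
    (bar : (Fin n → ℝ) → (Fin n → ℝ))
    (hbar : ∀ d ∈ pushL '' (↑Cbar : Set (Fin n → ℝ)),
      IsGreatest {c | c ∈ Cbar ∧ c ≤ d} (bar d)) :
    (∀ c ∈ Cbar, pushL' c = pushL' (bar (pushL c))) ∧
    Set.BijOn (fun d => pushL' (bar d)) (pushL '' (↑Cbar : Set (Fin n → ℝ)))
      (pushL' '' (↑Cbar : Set (Fin n → ℝ))) ∧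
    (∀ d ∈ pushL '' (↑Cbar : Set (Fin n → ℝ)),
      ∀ e ∈ pushL '' (↑Cbar : Set (Fin n → ℝ)),
        d ≤ e → pushL' (bar d) ≤ pushL' (bar e)) :=
  stmt_14_general L L' hL hL' Cbar hclosed pushL pushL' hpush hpush' AL AL' hAL hAL' hequiv bar hbar
end

section
/- Let 𝕍 be a persistence module over ℝ^n satisfying hypothesis (⋆) with respect to C̄. Let L, L′ ⊆ ℝ^n be lines with positive slope such that L ∼_C̄ L′. Write push_L(C̄) = {c¹ ≺ c² ≺ … ≺ c^r} in increasing order, and for each i let d^i = push_{L′}(c̄^i), where c̄^i is the greatest element of {c ∈ C̄ : c ≼ c^i}. Then for all 1 ≤ h ≤ k ≤ r, ρ(c^h, c^k) = ρ(d^h, d^k). In particular, for all i < j the multiplicities computed along the two lines agree: μ_𝕍(c^i, c^j) = μ_𝕍(d^i, d^j) and μ_𝕍(c^i, ∞) = μ_𝕍(d^i, ∞). -/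
/-- A persistence module over `ℝⁿ` (with the componentwise order) valued in
finite-dimensional `𝕜`-vector spaces: vector spaces `Vec u` and transition
maps `map : Vec u →ₗ Vec v` for `u ≼ v`, functorially. -/
structure PersistenceModule (n : ℕ) (𝕜 : Type) [Field 𝕜] where
  Vec : (Fin n → ℝ) → Type
  [addCommGroup : ∀ u, AddCommGroup (Vec u)]
  [module : ∀ u, Module 𝕜 (Vec u)]
  [finiteDimensional : ∀ u, FiniteDimensional 𝕜 (Vec u)]
  map : ∀ {u v : Fin n → ℝ}, u ≤ v → (Vec u →ₗ[𝕜] Vec v)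
  map_id : ∀ u : Fin n → ℝ, map (le_refl u) = LinearMap.id
  map_comp : ∀ {u v w : Fin n → ℝ} (h₁ : u ≤ v) (h₂ : v ≤ w),
    (map h₂).comp (map h₁) = map (h₁.trans h₂)

attribute [instance] PersistenceModule.addCommGroup PersistenceModule.module
  PersistenceModule.finiteDimensional

/-- The rank invariant `ρ(u,v) = rank i^{u,v}` (by convention `0` if `u ≼ v`
fails). -/
noncomputable def rho {n : ℕ} {𝕜 : Type} [Field 𝕜] (M : PersistenceModule n 𝕜)
    (u v : Fin n → ℝ) : ℕ :=
  letI : Decidable (u ≤ v) := Classical.dec _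
  if h : u ≤ v then Module.finrank 𝕜 (LinearMap.range (M.map h)) else 0

/-- Hypothesis (⋆) relative to a finite set `C̄ ⊆ ℝⁿ`: for all `u ≼ v`,
`ρ(u,v) = ρ(ū,v̄)` whenever `{c ∈ C̄ : c ≼ u}` is nonempty (`ū` denoting the
greatest element of `{c ∈ C̄ : c ≼ u}`), and `ρ(u,v) = 0` otherwise. -/
def HypStar {n : ℕ} {𝕜 : Type} [Field 𝕜] (M : PersistenceModule n 𝕜)
    (Cbar : Finset (Fin n → ℝ)) : Prop :=
  ∀ u v : Fin n → ℝ, u ≤ v →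
    (((∃ c ∈ Cbar, c ≤ u) →
      ∀ ub vb : Fin n → ℝ, IsGreatest {c | c ∈ Cbar ∧ c ≤ u} ub →
        IsGreatest {c | c ∈ Cbar ∧ c ≤ v} vb → rho M u v = rho M ub vb) ∧
      (¬ (∃ c ∈ Cbar, c ≤ u) → rho M u v = 0))

/-- The strict componentwise order `u ≺ v` on `ℝⁿ`. -/
def SLt {n : ℕ} (u v : Fin n → ℝ) : Prop := ∀ i, u i < v i

/-- The multiplicity `μ_𝕍(u,v)` of a pair `u ≺ v`: the minimum over vectors
`e ≻ 0` with `u + e ≺ v − e` of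
`ρ(u+e,v−e) − ρ(u−e,v−e) − ρ(u+e,v+e) + ρ(u−e,v+e)`. -/
noncomputable def mu {n : ℕ} {𝕜 : Type} [Field 𝕜] (M : PersistenceModule n 𝕜)
    (u v : Fin n → ℝ) : ℤ :=
  sInf {z : ℤ | ∃ e : Fin n → ℝ, SLt 0 e ∧ SLt (u + e) (v - e) ∧
    z = (rho M (u + e) (v - e) : ℤ) - (rho M (u - e) (v - e) : ℤ)
      - (rho M (u + e) (v + e) : ℤ) + (rho M (u - e) (v + e) : ℤ)}

/-- The multiplicity at infinity `μ_𝕍(u,∞)`: the minimum over `e ≻ 0` and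
`v ≽ u` of `ρ(u+e,v) − ρ(u−e,v)`. -/
noncomputable def muInf {n : ℕ} {𝕜 : Type} [Field 𝕜] (M : PersistenceModule n 𝕜)
    (u : Fin n → ℝ) : ℤ :=
  sInf {z : ℤ | ∃ e v : Fin n → ℝ, SLt 0 e ∧ u ≤ v ∧
    z = (rho M (u + e) v : ℤ) - (rho M (u - e) v : ℤ)}

/-- `ρ(cⁱ, cʲ)` as an integer, with the convention that any term involving the
index `0` (i.e. `c⁰`) is `0`. -/
noncomputable def rhoz {n : ℕ} {𝕜 : Type} [Field 𝕜] (M : PersistenceModule n 𝕜)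
    (c : ℕ → (Fin n → ℝ)) (i j : ℕ) : ℤ :=
  if i = 0 ∨ j = 0 then 0 else (rho M (c i) (c j) : ℤ)

/- ### Auxiliary lemmas ### -/
section
variable {n : ℕ} {𝕜 : Type} [Field 𝕜] (M : PersistenceModule n 𝕜)

lemma rho_of_le {u v : Fin n → ℝ} (h : u ≤ v) :
    rho M u v = Module.finrank 𝕜 (LinearMap.range (M.map h)) := by
  unfold rho; exact dif_pos h

lemma rho_of_not_le {u v : Fin n → ℝ} (h : ¬ u ≤ v) : rho M u v = 0 := by
  unfold rho; exact dif_neg h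

lemma rho_mono_src {a b c : Fin n → ℝ} (hab : a ≤ b) (hbc : b ≤ c) :
    rho M a c ≤ rho M b c := by
  rw [rho_of_le M (hab.trans hbc), rho_of_le M hbc]
  have h : M.map (hab.trans hbc) = (M.map hbc).comp (M.map hab) := (M.map_comp hab hbc).symm
  rw [h]
  exact Submodule.finrank_mono (LinearMap.range_comp_le_range _ _)

lemma rho_mono_tgt {a b c : Fin n → ℝ} (hab : a ≤ b) (hbc : b ≤ c) :
    rho M a c ≤ rho M a b := by
  rw [rho_of_le M (hab.trans hbc), rho_of_le M hab]
  have h : M.map (hab.trans hbc) = (M.map hbc).comp (M.map hab) := (M.map_comp hab hbc).symm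
  rw [h, LinearMap.range_comp]
  exact Submodule.finrank_map_le _ _

end
section
variable {n : ℕ} {𝕜 : Type} [Field 𝕜] (M : PersistenceModule n 𝕜)

lemma rho_rect {a1 a2 b1 b2 : Fin n → ℝ} (h12 : a1 ≤ a2) (h2b : a2 ≤ b1) (hb : b1 ≤ b2) :
    rho M a1 b1 + rho M a2 b2 ≤ rho M a2 b1 + rho M a1 b2 := by
  classical
  set φ := M.map hb with hφ
  set X := LinearMap.range (M.map h2b) with hX
  set Y := LinearMap.range (M.map (h12.trans h2b)) with hY
  have hcompY : M.map (h12.trans h2b) = (M.map h2b).comp (M.map h12) := (M.map_comp h12 h2b).symm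
  have hYX : Y ≤ X := by rw [hY, hcompY]; exact LinearMap.range_comp_le_range _ _
  have hr11 : rho M a1 b1 = Module.finrank 𝕜 Y := rho_of_le M _
  have hr21 : rho M a2 b1 = Module.finrank 𝕜 X := rho_of_le M _
  have hr22 : rho M a2 b2 = Module.finrank 𝕜 (X.map φ) := by
    rw [rho_of_le M (h2b.trans hb)]
    have : M.map (h2b.trans hb) = φ.comp (M.map h2b) := (M.map_comp h2b hb).symm
    rw [this, LinearMap.range_comp]
  have hr12 : rho M a1 b2 = Module.finrank 𝕜 (Y.map φ) := by
    rw [rho_of_le M ((h12.trans h2b).trans hb)]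
    have : M.map ((h12.trans h2b).trans hb) = φ.comp (M.map (h12.trans h2b)) :=
      (M.map_comp (h12.trans h2b) hb).symm
    rw [this, LinearMap.range_comp]
  rw [hr11, hr21, hr22, hr12]
  -- ψ : X → V_{b2} ⧸ (Y.map φ)
  set ψ : ↥X →ₗ[𝕜] (M.Vec b2) ⧸ (Y.map φ) :=
    ((Y.map φ).mkQ).comp (φ.comp X.subtype) with hψ
  have hrange : LinearMap.range ψ = ((X.map φ)).map ((Y.map φ).mkQ) := by
    rw [hψ, LinearMap.range_comp, LinearMap.range_comp, Submodule.range_subtype]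
  have hkerY : Y.comap X.subtype ≤ LinearMap.ker ψ := by
    intro x hx
    simp only [Submodule.mem_comap] at hx
    simp only [hψ, LinearMap.mem_ker, LinearMap.comp_apply, Submodule.subtype_apply,
      Submodule.mkQ_apply, Submodule.Quotient.mk_eq_zero]
    exact Submodule.mem_map_of_mem hx
  have h1 : Module.finrank 𝕜 Y ≤ Module.finrank 𝕜 (LinearMap.ker ψ) := by
    calc Module.finrank 𝕜 ↥Y = Module.finrank 𝕜 ↥(Y.comap X.subtype) :=
          (Submodule.comapSubtypeEquivOfLe hYX).finrank_eq.symm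
      _ ≤ _ := Submodule.finrank_mono hkerY
  have hrn1 : Module.finrank 𝕜 (LinearMap.range ψ) + Module.finrank 𝕜 (LinearMap.ker ψ)
      = Module.finrank 𝕜 ↥X := LinearMap.finrank_range_add_finrank_ker ψ
  -- χ : X.map φ → quotient
  set χ : ↥(X.map φ) →ₗ[𝕜] (M.Vec b2) ⧸ (Y.map φ) :=
    ((Y.map φ).mkQ).comp ((X.map φ).subtype) with hχ
  have hrangeχ : LinearMap.range χ = ((X.map φ)).map ((Y.map φ).mkQ) := by
    rw [hχ, LinearMap.range_comp, Submodule.range_subtype]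
  have hkerχ : LinearMap.ker χ ≤ (Y.map φ).comap ((X.map φ).subtype) := by
    intro x hx
    simp only [hχ, LinearMap.mem_ker, LinearMap.comp_apply, Submodule.subtype_apply,
      Submodule.mkQ_apply, Submodule.Quotient.mk_eq_zero] at hx
    exact hx
  have h2 : Module.finrank 𝕜 (LinearMap.ker χ) ≤ Module.finrank 𝕜 (Y.map φ) := by
    have heq := (Submodule.comapSubtypeEquivOfLe (Submodule.map_mono hYX (f := φ))).finrank_eq
    calc Module.finrank 𝕜 (LinearMap.ker χ)
        ≤ Module.finrank 𝕜 ((Y.map φ).comap ((X.map φ).subtype)) := Submodule.finrank_mono hkerχ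
      _ = Module.finrank 𝕜 (Y.map φ) := heq
  have hrn2 : Module.finrank 𝕜 (LinearMap.range χ) + Module.finrank 𝕜 (LinearMap.ker χ)
      = Module.finrank 𝕜 ↥(X.map φ) := LinearMap.finrank_range_add_finrank_ker χ
  have hrr : Module.finrank 𝕜 (LinearMap.range χ) = Module.finrank 𝕜 (LinearMap.range ψ) := by
    rw [hrange, hrangeχ]
  omega

end
section
variable {n : ℕ}

lemma exists_greatest_aux (Cbar : Finset (Fin n → ℝ))
    (hclosed : ∀ a ∈ Cbar, ∀ b ∈ Cbar, a ⊔ b ∈ Cbar)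
    (P : (Fin n → ℝ) → Prop) (hP : ∀ x y, P x → P y → P (x ⊔ y))
    (hne : ∃ c ∈ Cbar, P c) :
    ∃ g, IsGreatest {x | x ∈ Cbar ∧ P x} g := by
  classical
  set T : Finset (Fin n → ℝ) := Cbar.filter P with hT
  obtain ⟨c, hc, hPc⟩ := hne
  have hTne : T.Nonempty := ⟨c, by simp [hT, hc, hPc]⟩
  refine ⟨T.sup' hTne id, ?_, ?_⟩
  · exact Finset.sup'_induction (p := fun y => y ∈ Cbar ∧ P y) hTne id
      (fun a ha b hb => ⟨hclosed a ha.1 b hb.1, hP a b ha.2 hb.2⟩)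
      (fun b hb => by
        simp only [hT, Finset.mem_filter] at hb
        exact ⟨hb.1, hb.2⟩)
  · intro x hx
    exact Finset.le_sup' id (by simp [hT, hx.1, hx.2])

lemma sup_le_both {u x y : Fin n → ℝ} (hx : x ≤ u) (hy : y ≤ u) : x ⊔ y ≤ u := sup_le hx hy

lemma sup_slt_both {u x y : Fin n → ℝ} (hx : SLt x u) (hy : SLt y u) : SLt (x ⊔ y) u := by
  intro k; exact max_lt (hx k) (hy k)

lemma slt_le {u v : Fin n → ℝ} (h : SLt u v) : u ≤ v := fun k => (h k).le

/-- stabilization: small ε making the down-sets around u constant -/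
lemma exists_eps (Cbar : Finset (Fin n → ℝ)) (u : Fin n → ℝ) :
    ∃ e₀ : Fin n → ℝ, SLt 0 e₀ ∧ ∀ e : Fin n → ℝ, SLt 0 e → e ≤ e₀ →
      ({x | x ∈ Cbar ∧ x ≤ u + e} = {x | x ∈ Cbar ∧ x ≤ u}) ∧
      ({x | x ∈ Cbar ∧ x ≤ u - e} = {x | x ∈ Cbar ∧ SLt x u}) := by
  classical
  set F : Finset ℝ :=
    insert 1 ((Cbar.biUnion fun c =>
      (Finset.univ : Finset (Fin n)).image fun k => |c k - u k|).filter (fun x => 0 < x)) with hF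
  have hFne : F.Nonempty := ⟨1, Finset.mem_insert_self _ _⟩
  set δ : ℝ := F.min' hFne with hδ
  have hδpos : 0 < δ := by
    have hm := F.min'_mem hFne
    rw [← hδ] at hm
    rcases Finset.mem_insert.1 hm with h | h
    · rw [h]; norm_num
    · exact (Finset.mem_filter.1 h).2
  have hkey : ∀ c ∈ Cbar, ∀ k : Fin n, c k ≠ u k → δ ≤ |c k - u k| := by
    intro c hc k hne
    apply Finset.min'_le
    rw [hF]
    apply Finset.mem_insert_of_mem
    rw [Finset.mem_filter]
    constructor
    · exact Finset.mem_biUnion.2 ⟨c, hc, Finset.mem_image.2 ⟨k, Finset.mem_univ _, rfl⟩⟩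
    · exact abs_pos.2 (sub_ne_zero.2 hne)
  refine ⟨fun _ => δ / 2, fun k => by simpa using half_pos hδpos, ?_⟩
  intro e he0 hee
  have heδ : ∀ k, e k < δ := fun k => lt_of_le_of_lt (hee k) (half_lt_self hδpos)
  constructor
  · ext x
    simp only [Set.mem_setOf_eq, and_congr_right_iff]
    intro hx
    constructor
    · intro h k
      by_contra hlt
      push_neg at hlt
      have hne : x k ≠ u k := ne_of_gt hlt
      have := hkey x hx k hne
      rw [abs_of_pos (sub_pos.2 hlt)] at this
      have h1 := h k
      simp only [Pi.add_apply] at h1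
      have := heδ k
      linarith
    · intro h k
      have := he0 k
      simp only [Pi.zero_apply] at this
      simp only [Pi.add_apply]
      linarith [h k]
  · ext x
    simp only [Set.mem_setOf_eq, and_congr_right_iff]
    intro hx
    constructor
    · intro h k
      have h1 := h k
      simp only [Pi.sub_apply] at h1
      have := he0 k
      simp only [Pi.zero_apply] at this
      linarith
    · intro h k
      have h1 := h k
      have hne : x k ≠ u k := ne_of_lt h1
      have := hkey x hx k hne
      rw [abs_of_neg (sub_neg.2 h1)] at this
      simp only [Pi.sub_apply]
      have := heδ k
      linarith [hkey x hx k hne, abs_of_neg (sub_neg.2 h1)]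

lemma posline_le {L : Set (Fin n → ℝ)} (hL : PosLine L) {x y : Fin n → ℝ}
    (hx : x ∈ L) (hy : y ∈ L) {k : Fin n} (h : x k ≤ y k) : x ≤ y := by
  obtain ⟨u₀, m, hm, rfl⟩ := hL
  obtain ⟨s, rfl⟩ := hx
  obtain ⟨t, rfl⟩ := hy
  simp only [Pi.add_apply, Pi.smul_apply, smul_eq_mul] at h
  have hst : s ≤ t := by
    by_contra hst
    push_neg at hst
    have := mul_lt_mul_of_pos_right hst (hm k)
    linarith
  intro j
  simp only [Pi.add_apply, Pi.smul_apply, smul_eq_mul]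
  nlinarith [hm j, mul_le_mul_of_nonneg_right hst (hm j).le]

lemma posline_slt {L : Set (Fin n → ℝ)} (hn : 0 < n) (hL : PosLine L) {x y : Fin n → ℝ}
    (hx : x ∈ L) (hy : y ∈ L) (hle : x ≤ y) (hne : x ≠ y) : SLt x y := by
  obtain ⟨u₀, m, hm, rfl⟩ := hL
  obtain ⟨s, rfl⟩ := hx
  obtain ⟨t, rfl⟩ := hy
  set k : Fin n := ⟨0, hn⟩
  have h1 := hle k
  simp only [Pi.add_apply, Pi.smul_apply, smul_eq_mul] at h1
  have hst : s ≤ t := by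
    by_contra hst
    push_neg at hst
    have := mul_lt_mul_of_pos_right hst (hm k)
    linarith
  have hst' : s < t := by
    rcases lt_or_eq_of_le hst with h | h
    · exact h
    · exact absurd (by rw [h]) hne
  intro j
  simp only [Pi.add_apply, Pi.smul_apply, smul_eq_mul]
  have := mul_lt_mul_of_pos_right hst' (hm j)
  linarith

end
section
variable {n : ℕ} {𝕜 : Type} [Field 𝕜] (M : PersistenceModule n 𝕜)

lemma rho_star {Cbar : Finset (Fin n → ℝ)} (hstar : HypStar M Cbar)
    {a b ga gb : Fin n → ℝ} (hab : a ≤ b)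
    (hga : IsGreatest {x | x ∈ Cbar ∧ x ≤ a} ga)
    (hgb : IsGreatest {x | x ∈ Cbar ∧ x ≤ b} gb) :
    rho M a b = rho M ga gb :=
  (hstar a b hab).1 ⟨ga, hga.1.1, hga.1.2⟩ ga gb hga hgb

lemma mu_mono {u v e e' : Fin n → ℝ} (he' : SLt 0 e') (hee : e' ≤ e)
    (hv : SLt (u + e) (v - e)) :
    (rho M (u + e') (v - e') : ℤ) - rho M (u - e') (v - e')
      - rho M (u + e') (v + e') + rho M (u - e') (v + e')
    ≤ (rho M (u + e) (v - e) : ℤ) - rho M (u - e) (v - e)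
      - rho M (u + e) (v + e) + rho M (u - e) (v + e) := by
  have key : ∀ k, u k + e k < v k - e k := fun k => by
    have := hv k; simpa using this
  have he'p : ∀ k, 0 < e' k := fun k => by simpa using he' k
  have hep : ∀ k, 0 < e k := fun k => lt_of_lt_of_le (he'p k) (hee k)
  have c1 : u - e ≤ u - e' := fun k => by simp only [Pi.sub_apply]; linarith [hee k]
  have c2 : u - e' ≤ v - e := fun k => by
    simp only [Pi.sub_apply]; linarith [key k, he'p k, hep k]
  have c3 : v - e ≤ v + e := fun k => by simp only [Pi.sub_apply, Pi.add_apply]; linarith [hep k]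
  have c4 : u + e' ≤ u + e := fun k => by simp only [Pi.add_apply]; linarith [hee k]
  have c5 : u + e ≤ v - e := fun k => (key k).le
  have c6 : u - e' ≤ u + e' := fun k => by
    simp only [Pi.sub_apply, Pi.add_apply]; linarith [he'p k]
  have c7 : u + e' ≤ v - e := c4.trans c5
  have c8 : v - e ≤ v - e' := fun k => by simp only [Pi.sub_apply]; linarith [hee k]
  have c9 : v + e' ≤ v + e := fun k => by simp only [Pi.add_apply]; linarith [hee k]
  have c10 : u + e' ≤ v + e' := c7.trans (c8.trans (fun k => by
    simp only [Pi.sub_apply, Pi.add_apply]; linarith [he'p k]))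
  have A := rho_rect M c1 c2 c3
  have B := rho_rect M c4 c5 c3
  have C1 := rho_rect M c6 c7 c8
  have C2 := rho_rect M c6 c10 c9
  have A' : (rho M (u-e) (v-e) : ℤ) + rho M (u-e') (v+e)
      ≤ (rho M (u-e') (v-e) : ℤ) + rho M (u-e) (v+e) := by exact_mod_cast A
  have B' : (rho M (u+e') (v-e) : ℤ) + rho M (u+e) (v+e)
      ≤ (rho M (u+e) (v-e) : ℤ) + rho M (u+e') (v+e) := by exact_mod_cast B
  have C1' : (rho M (u-e') (v-e) : ℤ) + rho M (u+e') (v-e')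
      ≤ (rho M (u+e') (v-e) : ℤ) + rho M (u-e') (v-e') := by exact_mod_cast C1
  have C2' : (rho M (u-e') (v+e') : ℤ) + rho M (u+e') (v+e)
      ≤ (rho M (u+e') (v+e') : ℤ) + rho M (u-e') (v+e) := by exact_mod_cast C2
  linarith

end
open Classical in
/-- `ρ(g, y)` where `g` is the greatest element of `S`, or `0` if none exists. -/
noncomputable def Eterm {n : ℕ} {𝕜 : Type} [Field 𝕜] (M : PersistenceModule n 𝕜)
    (S : Set (Fin n → ℝ)) (y : Fin n → ℝ) : ℤ :=
  if h : ∃ g, IsGreatest S g then (rho M h.choose y : ℤ) else 0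

lemma Eterm_pos {n : ℕ} {𝕜 : Type} [Field 𝕜] (M : PersistenceModule n 𝕜)
    {S : Set (Fin n → ℝ)} (h : ∃ g, IsGreatest S g) (y : Fin n → ℝ) :
    Eterm M S y = (rho M h.choose y : ℤ) := by
  unfold Eterm; exact dif_pos h

lemma Eterm_neg {n : ℕ} {𝕜 : Type} [Field 𝕜] (M : PersistenceModule n 𝕜)
    {S : Set (Fin n → ℝ)} (h : ¬ ∃ g, IsGreatest S g) (y : Fin n → ℝ) :
    Eterm M S y = 0 := by
  unfold Eterm; exact dif_neg h
section
variable {n : ℕ} {𝕜 : Type} [Field 𝕜] (M : PersistenceModule n 𝕜)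

lemma mu_formula (Cbar : Finset (Fin n → ℝ))
    (hclosed : ∀ a ∈ Cbar, ∀ b ∈ Cbar, a ⊔ b ∈ Cbar)
    (hstar : HypStar M Cbar)
    (u v ub vb vm : Fin n → ℝ) (Su : Set (Fin n → ℝ))
    (huv : SLt u v)
    (hub : IsGreatest {x | x ∈ Cbar ∧ x ≤ u} ub)
    (hvb : IsGreatest {x | x ∈ Cbar ∧ x ≤ v} vb)
    (hvm : IsGreatest {x | x ∈ Cbar ∧ SLt x v} vm)
    (hSu : {x | x ∈ Cbar ∧ SLt x u} = Su) :
    mu M u v = (rho M ub vm : ℤ) - (rho M ub vb : ℤ) +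
      (Eterm M Su vb - Eterm M Su vm) := by
  classical
  obtain ⟨e₀u, he₀u, hstabu⟩ := exists_eps Cbar u
  obtain ⟨e₀v, he₀v, hstabv⟩ := exists_eps Cbar v
  set RHS : ℤ := (rho M ub vm : ℤ) - (rho M ub vb : ℤ) +
      (Eterm M Su vb - Eterm M Su vm) with hRHS
  have heval : ∀ e : Fin n → ℝ, SLt 0 e → e ≤ e₀u → e ≤ e₀v → u + e ≤ v - e →
      (rho M (u + e) (v - e) : ℤ) - rho M (u - e) (v - e)
        - rho M (u + e) (v + e) + rho M (u - e) (v + e) = RHS := by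
    intro e he0 heu hev huev
    obtain ⟨hsetu1, hsetu2⟩ := hstabu e he0 heu
    obtain ⟨hsetv1, hsetv2⟩ := hstabv e he0 hev
    have he0' : ∀ k, 0 < e k := fun k => by simpa using he0 k
    have l1 : u - e ≤ u + e := fun k => by
      simp only [Pi.sub_apply, Pi.add_apply]; linarith [he0' k]
    have l2 : v - e ≤ v + e := fun k => by
      simp only [Pi.sub_apply, Pi.add_apply]; linarith [he0' k]
    have l3 : u - e ≤ v - e := l1.trans huev
    have l4 : u + e ≤ v + e := huev.trans l2
    have l5 : u - e ≤ v + e := l3.trans l2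
    have hA : rho M (u + e) (v - e) = rho M ub vm :=
      rho_star M hstar huev (hsetu1.symm ▸ hub) (hsetv2.symm ▸ hvm)
    have hC : rho M (u + e) (v + e) = rho M ub vb :=
      rho_star M hstar l4 (hsetu1.symm ▸ hub) (hsetv1.symm ▸ hvb)
    by_cases h : ∃ g, IsGreatest Su g
    · have hg : IsGreatest {x | x ∈ Cbar ∧ x ≤ u - e} h.choose :=
        (hsetu2.trans hSu).symm ▸ h.choose_spec
      have hB : rho M (u - e) (v - e) = rho M h.choose vm :=
        rho_star M hstar l3 hg (hsetv2.symm ▸ hvm)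
      have hD : rho M (u - e) (v + e) = rho M h.choose vb :=
        rho_star M hstar l5 hg (hsetv1.symm ▸ hvb)
      rw [hA, hB, hC, hD, hRHS, Eterm_pos M h vb, Eterm_pos M h vm]; ring
    · have hnone : ¬ ∃ c ∈ Cbar, c ≤ u - e := by
        rintro ⟨c0, hc0, hcle⟩
        have hc0' : c0 ∈ {x | x ∈ Cbar ∧ SLt x u} := hsetu2 ▸ (⟨hc0, hcle⟩ :
          c0 ∈ {x | x ∈ Cbar ∧ x ≤ u - e})
        have hex : ∃ g, IsGreatest {x | x ∈ Cbar ∧ SLt x u} g :=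
          exists_greatest_aux Cbar hclosed _ (fun x y hx hy => sup_slt_both hx hy)
            ⟨c0, hc0'.1, hc0'.2⟩
        rw [hSu] at hex
        exact h hex
      have hB : rho M (u - e) (v - e) = 0 := (hstar _ _ l3).2 hnone
      have hD : rho M (u - e) (v + e) = 0 := (hstar _ _ l5).2 hnone
      rw [hA, hB, hC, hD, hRHS, Eterm_neg M h vb, Eterm_neg M h vm]; ring
  set e₁ : Fin n → ℝ := fun k => min (min (e₀u k) (e₀v k)) ((v k - u k) / 3) with he₁
  have he₁0 : SLt 0 e₁ := by
    intro k
    simp only [he₁, Pi.zero_apply]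
    have h1 : 0 < e₀u k := by simpa using he₀u k
    have h2 : 0 < e₀v k := by simpa using he₀v k
    have h3 : 0 < (v k - u k) / 3 := by have := huv k; linarith
    positivity
  have he₁u : e₁ ≤ e₀u := fun k => le_trans (min_le_left _ _) (min_le_left _ _)
  have he₁v : e₁ ≤ e₀v := fun k => le_trans (min_le_left _ _) (min_le_right _ _)
  have he₁g : ∀ k, e₁ k ≤ (v k - u k) / 3 := fun k => min_le_right _ _
  have hlt₁ : SLt (u + e₁) (v - e₁) := by
    intro k
    have h1 : 0 < e₁ k := by simpa using he₁0 k
    have := he₁g k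
    simp only [Pi.add_apply, Pi.sub_apply]
    linarith
  have hmem : RHS ∈ {z : ℤ | ∃ e : Fin n → ℝ, SLt 0 e ∧ SLt (u + e) (v - e) ∧
      z = (rho M (u + e) (v - e) : ℤ) - (rho M (u - e) (v - e) : ℤ)
        - (rho M (u + e) (v + e) : ℤ) + (rho M (u - e) (v + e) : ℤ)} :=
    ⟨e₁, he₁0, hlt₁, (heval e₁ he₁0 he₁u he₁v (slt_le hlt₁)).symm⟩
  have hlb : ∀ z ∈ {z : ℤ | ∃ e : Fin n → ℝ, SLt 0 e ∧ SLt (u + e) (v - e) ∧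
      z = (rho M (u + e) (v - e) : ℤ) - (rho M (u - e) (v - e) : ℤ)
        - (rho M (u + e) (v + e) : ℤ) + (rho M (u - e) (v + e) : ℤ)}, RHS ≤ z := by
    rintro z ⟨e, he0, hlt, rfl⟩
    set e' : Fin n → ℝ := fun k => min (e k) (e₁ k) with he'
    have he'0 : SLt 0 e' := by
      intro k
      simp only [he', Pi.zero_apply]
      have h1 : 0 < e k := by simpa using he0 k
      have h2 : 0 < e₁ k := by simpa using he₁0 k
      positivity
    have he'e : e' ≤ e := fun k => min_le_left _ _
    have he'₁ : e' ≤ e₁ := fun k => min_le_right _ _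
    have hue' : u + e' ≤ v - e' := by
      intro k
      have h1 := hlt k
      simp only [Pi.add_apply, Pi.sub_apply] at h1 ⊢
      have := he'e k
      linarith
    calc RHS = (rho M (u + e') (v - e') : ℤ) - rho M (u - e') (v - e')
        - rho M (u + e') (v + e') + rho M (u - e') (v + e') :=
          (heval e' he'0 (he'₁.trans he₁u) (he'₁.trans he₁v) hue').symm
      _ ≤ _ := mu_mono M he'0 he'e hlt
  unfold mu
  exact le_antisymm (csInf_le ⟨RHS, fun z hz => hlb z hz⟩ hmem) (le_csInf ⟨RHS, hmem⟩ hlb)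

end
section
variable {n : ℕ} {𝕜 : Type} [Field 𝕜] (M : PersistenceModule n 𝕜)

lemma muInf_formula (hn : 0 < n) (Cbar : Finset (Fin n → ℝ))
    (hclosed : ∀ a ∈ Cbar, ∀ b ∈ Cbar, a ⊔ b ∈ Cbar)
    (hstar : HypStar M Cbar)
    (u ub top : Fin n → ℝ) (Su : Set (Fin n → ℝ))
    (hub : IsGreatest {x | x ∈ Cbar ∧ x ≤ u} ub)
    (htop : top ∈ Cbar ∧ ∀ x ∈ Cbar, x ≤ top)
    (hSu : {x | x ∈ Cbar ∧ SLt x u} = Su) :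
    muInf M u = min ((rho M ub top : ℤ) - Eterm M Su top) (- Eterm M Su ub) := by
  classical
  obtain ⟨e₀, he₀, hstab⟩ := exists_eps Cbar u
  have he₀' : ∀ k, 0 < e₀ k := fun k => by simpa using he₀ k
  have htopg : ∀ w : Fin n → ℝ, top ≤ w → IsGreatest {x | x ∈ Cbar ∧ x ≤ w} top :=
    fun w hw => ⟨⟨htop.1, hw⟩, fun x hx => htop.2 x hx.1⟩
  -- auxiliary: Su nonempty-greatest from a point below u - e (any e ≻ 0)
  have hSuex : ∀ e : Fin n → ℝ, SLt 0 e → (∃ c ∈ Cbar, c ≤ u - e) →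
      ∃ g, IsGreatest Su g := by
    rintro e he0 ⟨c0, hc0, hcle⟩
    have hslt : SLt c0 u := by
      intro k
      have h1 := hcle k
      have h2 : 0 < e k := by simpa using he0 k
      simp only [Pi.sub_apply] at h1
      linarith
    have hex : ∃ g, IsGreatest {x | x ∈ Cbar ∧ SLt x u} g :=
      exists_greatest_aux Cbar hclosed _ (fun x y hx hy => sup_slt_both hx hy)
        ⟨c0, hc0, hslt⟩
    rwa [hSu] at hex
  have hlowEval : ∀ e : Fin n → ℝ, SLt 0 e → e ≤ e₀ → ∀ y gy : Fin n → ℝ, u - e ≤ y →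
      IsGreatest {x | x ∈ Cbar ∧ x ≤ y} gy →
      (rho M (u - e) y : ℤ) = Eterm M Su gy := by
    intro e he0 hee y gy hy hgy
    obtain ⟨hset1, hset2⟩ := hstab e he0 hee
    by_cases h : ∃ g, IsGreatest Su g
    · rw [Eterm_pos M h gy]
      have hg : IsGreatest {x | x ∈ Cbar ∧ x ≤ u - e} h.choose := by
        rw [hset2.trans hSu]; exact h.choose_spec
      exact_mod_cast congrArg Nat.cast (rho_star M hstar hy hg hgy)
    · rw [Eterm_neg M h gy]
      have hnone : ¬ ∃ c ∈ Cbar, c ≤ u - e := fun hc => h (hSuex e he0 hc)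
      exact_mod_cast congrArg Nat.cast ((hstar _ _ hy).2 hnone)
  set V1 : ℤ := (rho M ub top : ℤ) - Eterm M Su top with hV1
  set V2 : ℤ := - Eterm M Su ub with hV2
  set S : Set ℤ := {z : ℤ | ∃ e v : Fin n → ℝ, SLt 0 e ∧ u ≤ v ∧
    z = (rho M (u + e) v : ℤ) - (rho M (u - e) v : ℤ)} with hS
  have hsub : u - e₀ ≤ u + e₀ := fun k => by
    simp only [Pi.sub_apply, Pi.add_apply]; linarith [he₀' k]
  have hule : u ≤ u + e₀ := fun k => by simp only [Pi.add_apply]; linarith [he₀' k]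
  set vbig : Fin n → ℝ := top ⊔ (u + e₀) with hvbig
  have hmem1 : V1 ∈ S := by
    refine ⟨e₀, vbig, he₀, hule.trans le_sup_right, ?_⟩
    obtain ⟨hset1, hset2⟩ := hstab e₀ he₀ le_rfl
    have h1 : rho M (u + e₀) vbig = rho M ub top :=
      rho_star M hstar le_sup_right (hset1.symm ▸ hub) (htopg vbig le_sup_left)
    have h2 : (rho M (u - e₀) vbig : ℤ) = Eterm M Su top :=
      hlowEval e₀ he₀ le_rfl vbig top (hsub.trans le_sup_right) (htopg vbig le_sup_left)
    rw [h1, h2]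
  have hmem2 : V2 ∈ S := by
    refine ⟨e₀, u, he₀, le_rfl, ?_⟩
    have h1 : rho M (u + e₀) u = 0 := by
      apply rho_of_not_le
      intro h
      have := h ⟨0, hn⟩
      simp only [Pi.add_apply] at this
      linarith [he₀' ⟨0, hn⟩]
    have h2 : (rho M (u - e₀) u : ℤ) = Eterm M Su ub :=
      hlowEval e₀ he₀ le_rfl u ub (fun k => by
        simp only [Pi.sub_apply]; linarith [he₀' k]) hub
    rw [h1, h2, hV2]
    ring
  have hlb : ∀ z ∈ S, min V1 V2 ≤ z := by
    rintro z ⟨e, v, he0, huv, rfl⟩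
    have he0' : ∀ k, 0 < e k := fun k => by simpa using he0 k
    by_cases hc : u + e ≤ v
    · refine le_trans (min_le_left _ _) ?_
      set e' : Fin n → ℝ := fun k => min (e k) (e₀ k) with he'
      have he'0 : SLt 0 e' := fun k => by
        simp only [he', Pi.zero_apply]
        exact lt_min (he0' k) (he₀' k)
      have he'e : e' ≤ e := fun k => min_le_left _ _
      have he'₀ : e' ≤ e₀ := fun k => min_le_right _ _
      have he'0' : ∀ k, 0 < e' k := fun k => by simpa using he'0 k
      have c4 : u + e' ≤ u + e := fun k => by
        simp only [Pi.add_apply]; linarith [he'e k]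
      have c6 : u - e ≤ u - e' := fun k => by
        simp only [Pi.sub_apply]; linarith [he'e k]
      have c7 : u - e' ≤ u + e' := fun k => by
        simp only [Pi.sub_apply, Pi.add_apply]; linarith [he'0' k]
      have c8 : u + e' ≤ v := c4.trans hc
      set v' : Fin n → ℝ := v ⊔ top with hv'
      obtain ⟨hset1, hset2⟩ := hstab e' he'0 he'₀
      have step1 : rho M (u + e') v ≤ rho M (u + e) v := rho_mono_src M c4 hc
      have step2 : rho M (u - e) v ≤ rho M (u - e') v :=
        rho_mono_src M c6 (c7.trans c8)
      have step3 : rho M (u - e') v + rho M (u + e') v'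
          ≤ rho M (u + e') v + rho M (u - e') v' := rho_rect M c7 c8 le_sup_left
      have heq1 : rho M (u + e') v' = rho M ub top :=
        rho_star M hstar (c8.trans le_sup_left) (hset1.symm ▸ hub) (htopg v' le_sup_right)
      have heq2 : (rho M (u - e') v' : ℤ) = Eterm M Su top :=
        hlowEval e' he'0 he'₀ v' top ((c7.trans c8).trans le_sup_left)
          (htopg v' le_sup_right)
      have s1' : (rho M (u + e') v : ℤ) ≤ rho M (u + e) v := by exact_mod_cast step1
      have s2' : (rho M (u - e) v : ℤ) ≤ rho M (u - e') v := by exact_mod_cast step2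
      have s3' : (rho M (u - e') v : ℤ) + rho M (u + e') v'
          ≤ (rho M (u + e') v : ℤ) + rho M (u - e') v' := by exact_mod_cast step3
      rw [hV1, ← heq1, ← heq2]
      push_cast
      linarith
    · refine le_trans (min_le_right _ _) ?_
      rw [rho_of_not_le M hc]
      clear hc
      have husub : u - e ≤ u := fun k => by
        simp only [Pi.sub_apply]; linarith [he0' k]
      have hkey : (rho M (u - e) v : ℤ) ≤ Eterm M Su ub := by
        by_cases h : ∃ g, IsGreatest Su g
        · set g := h.choose with hg
          have hgspec := h.choose_spec
          have hgmem : g ∈ Cbar ∧ SLt g u := by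
            have : g ∈ {x | x ∈ Cbar ∧ SLt x u} := by rw [hSu]; exact hgspec.1
            exact this
          have hgub : g ≤ ub := hub.2 ⟨hgmem.1, slt_le hgmem.2⟩
          rw [Eterm_pos M h ub]
          by_cases hne : ∃ c ∈ Cbar, c ≤ u - e
          · obtain ⟨g', hg'⟩ := exists_greatest_aux Cbar hclosed (fun x => x ≤ u - e)
              (fun x y hx hy => sup_le_both hx hy) hne
            have hvne : ∃ c ∈ Cbar, c ≤ v :=
              ⟨g', hg'.1.1, (hg'.1.2.trans husub).trans huv⟩
            obtain ⟨vbar, hvbar⟩ := exists_greatest_aux Cbar hclosed (fun x => x ≤ v)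
              (fun x y hx hy => sup_le_both hx hy) hvne
            have heq : rho M (u - e) v = rho M g' vbar :=
              rho_star M hstar (husub.trans huv) hg' hvbar
            have hg'slt : SLt g' u := by
              intro k
              have h1 := hg'.1.2 k
              simp only [Pi.sub_apply] at h1
              linarith [he0' k]
            have hg'g : g' ≤ g := hgspec.2 (by rw [← hSu]; exact ⟨hg'.1.1, hg'slt⟩)
            have hg'ub : g' ≤ ub := hub.2 ⟨hg'.1.1, slt_le hg'slt⟩
            have hubvbar : ub ≤ vbar := hvbar.2 ⟨hub.1.1, hub.1.2.trans huv⟩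
            have st1 : rho M g' vbar ≤ rho M g' ub := rho_mono_tgt M hg'ub hubvbar
            have st2 : rho M g' ub ≤ rho M g ub := rho_mono_src M hg'g hgub
            rw [heq]
            exact_mod_cast st1.trans st2
          · rw [(hstar _ _ (husub.trans huv)).2 hne]
            positivity
        · rw [Eterm_neg M h ub]
          by_cases hne : ∃ c ∈ Cbar, c ≤ u - e
          · exact absurd (hSuex e he0 hne) h
          · rw [(hstar _ _ (husub.trans huv)).2 hne]
            norm_num
      linarith
  have hminmem : min V1 V2 ∈ S := by
    rcases min_choice V1 V2 with h | h <;> rw [h]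
    · exact hmem1
    · exact hmem2
  unfold muInf
  exact le_antisymm (csInf_le ⟨min V1 V2, fun z hz => hlb z hz⟩ hminmem)
    (le_csInf ⟨min V1 V2, hminmem⟩ hlb)

end
/-- let `𝕍` satisfy hypothesis (⋆) w.r.t. `C̄`, and let
`L ∼_C̄ L'` be equivalent lines with positive slope. Write
`push_L(C̄) = {c¹ ≺ … ≺ c^r}` and set `dⁱ = push_{L'}(c̄ⁱ)`, where `c̄ⁱ` is the
greatest element of `{c ∈ C̄ : c ≼ cⁱ}`. Then `ρ(c^h,c^k) = ρ(d^h,d^k)` for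
all `1 ≤ h ≤ k ≤ r`; in particular, the multiplicities along the two lines
agree: `μ(cⁱ,cʲ) = μ(dⁱ,dʲ)` for `i < j` and `μ(cⁱ,∞) = μ(dⁱ,∞)`. -/
theorem stmt_19 {n : ℕ} (hn : 0 < n) {𝕜 : Type} [Field 𝕜]
    (M : PersistenceModule n 𝕜)
    (Cbar : Finset (Fin n → ℝ)) (hCne : Cbar.Nonempty)
    (hclosed : ∀ a ∈ Cbar, ∀ b ∈ Cbar, a ⊔ b ∈ Cbar)
    (hstar : HypStar M Cbar)
    (L L' : Set (Fin n → ℝ)) (hL : PosLine L) (hL' : PosLine L')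
    (pushL pushL' : (Fin n → ℝ) → (Fin n → ℝ))
    (hpush : ∀ w : Fin n → ℝ, IsLeast {x | x ∈ L ∧ w ≤ x} (pushL w))
    (hpush' : ∀ w : Fin n → ℝ, IsLeast {x | x ∈ L' ∧ w ≤ x} (pushL' w))
    (AL AL' : (Fin n → ℝ) → Finset (Fin n))
    (hAL : ∀ w : Fin n → ℝ, (AL w).Nonempty ∧ pushL w ∈ SFace (AL w) w)
    (hAL' : ∀ w : Fin n → ℝ, (AL' w).Nonempty ∧ pushL' w ∈ SFace (AL' w) w)
    (hequiv : ∀ c ∈ Cbar, AL c = AL' c)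
    (r : ℕ) (hr : 1 ≤ r) (c : ℕ → (Fin n → ℝ))
    (hcmono : ∀ i j : ℕ, 1 ≤ i → i < j → j ≤ r → SLt (c i) (c j))
    (hcimg : pushL '' (↑Cbar : Set (Fin n → ℝ)) =
      {x | ∃ i : ℕ, 1 ≤ i ∧ i ≤ r ∧ x = c i})
    (cbar : ℕ → (Fin n → ℝ))
    (hcbar : ∀ i : ℕ, 1 ≤ i → i ≤ r →
      IsGreatest {x | x ∈ Cbar ∧ x ≤ c i} (cbar i))
    (d : ℕ → (Fin n → ℝ)) (hd : ∀ i : ℕ, d i = pushL' (cbar i)) :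
    (∀ h k : ℕ, 1 ≤ h → h ≤ k → k ≤ r →
      rho M (c h) (c k) = rho M (d h) (d k)) ∧
    (∀ i j : ℕ, 1 ≤ i → i < j → j ≤ r →
      mu M (c i) (c j) = mu M (d i) (d j)) ∧
    (∀ i : ℕ, 1 ≤ i → i ≤ r → muInf M (c i) = muInf M (d i)) := by
  classical
  -- basic facts about push maps
  have hpushLmono : ∀ {a b : Fin n → ℝ}, a ≤ b → pushL a ≤ pushL b :=
    fun {a b} h => (hpush a).2 ⟨(hpush b).1.1, h.trans (hpush b).1.2⟩
  have hpushL'mono : ∀ {a b : Fin n → ℝ}, a ≤ b → pushL' a ≤ pushL' b :=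
    fun {a b} h => (hpush' a).2 ⟨(hpush' b).1.1, h.trans (hpush' b).1.2⟩
  -- the key geometric lemma
  have hkey : ∀ a b : Fin n → ℝ, a ∈ Cbar → b ∈ Cbar → a ≤ b →
      pushL' a = pushL' b → pushL b ≤ pushL a := by
    intro a b ha hb hab hpp
    obtain ⟨k, hk⟩ := (hAL' a).1
    have hfa := (hAL' a).2
    have hfb := (hAL' b).2
    have hak : pushL' a k = a k := hfa.1 k hk
    have hbk : b k = pushL' a k := by
      have h1 : b k ≤ pushL' b k := (hpush' b).1.2 k
      rw [← hpp] at h1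
      have h3 : a k ≤ b k := hab k
      linarith [hak]
    have hkb : k ∈ AL' b := by
      by_contra hkb
      have h2 := hfb.2 k hkb
      rw [← hpp, ← hbk] at h2
      exact lt_irrefl _ h2
    have hkA : k ∈ AL a := by rw [hequiv a ha]; exact hk
    have hkBA : k ∈ AL b := by rw [hequiv b hb]; exact hkb
    have e1 : pushL b k = b k := (hAL b).2.1 k hkBA
    have e2 : pushL a k = a k := (hAL a).2.1 k hkA
    have hle : pushL b k ≤ pushL a k := by rw [e1, e2, hbk]; exact le_of_eq hak
    exact posline_le hL (hpush b).1.1 (hpush a).1.1 hle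
  -- c i = pushL (cbar i)
  have hcpush : ∀ i : ℕ, 1 ≤ i → i ≤ r → c i = pushL (cbar i) ∧ c i ∈ L := by
    intro i h1 hir
    have hmem : c i ∈ pushL '' (↑Cbar : Set (Fin n → ℝ)) := by
      rw [hcimg]; exact ⟨i, h1, hir, rfl⟩
    obtain ⟨a, ha, hap⟩ := hmem
    have haC : a ∈ Cbar := ha
    have haci : a ≤ c i := by rw [← hap]; exact (hpush a).1.2
    have hacbar : a ≤ cbar i := (hcbar i h1 hir).2 ⟨haC, haci⟩
    have hciL : c i ∈ L := by rw [← hap]; exact (hpush a).1.1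
    have h1' : pushL (cbar i) ≤ c i := (hpush (cbar i)).2 ⟨hciL, (hcbar i h1 hir).1.2⟩
    have h2' : c i ≤ pushL (cbar i) := by rw [← hap]; exact hpushLmono hacbar
    exact ⟨le_antisymm h2' h1', hciL⟩
  have hdL' : ∀ i : ℕ, d i ∈ L' := fun i => by rw [hd i]; exact (hpush' (cbar i)).1.1
  have hcbard : ∀ i : ℕ, cbar i ≤ d i := fun i => by rw [hd i]; exact (hpush' (cbar i)).1.2
  -- greatest element below d i is cbar i
  have hdgreat : ∀ i : ℕ, 1 ≤ i → i ≤ r →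
      IsGreatest {x | x ∈ Cbar ∧ x ≤ d i} (cbar i) := by
    intro i h1 hir
    refine ⟨⟨(hcbar i h1 hir).1.1, hcbard i⟩, ?_⟩
    rintro c' ⟨hc', hc'le⟩
    set b := c' ⊔ cbar i with hb
    have hbC : b ∈ Cbar := hclosed c' hc' (cbar i) (hcbar i h1 hir).1.1
    have hbd : b ≤ d i := sup_le hc'le (hcbard i)
    have hpb : pushL' b = d i := by
      refine le_antisymm ((hpush' b).2 ⟨hdL' i, hbd⟩) ?_
      rw [hd i]
      exact hpushL'mono le_sup_right
    have hpp : pushL' (cbar i) = pushL' b := by rw [hpb, hd i]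
    have hkb := hkey (cbar i) b (hcbar i h1 hir).1.1 hbC le_sup_right hpp
    have hbci : b ≤ c i := by
      rw [(hcpush i h1 hir).1]
      exact le_trans ((hpush b).1.2) hkb
    have : b ≤ cbar i := (hcbar i h1 hir).2 ⟨hbC, hbci⟩
    exact le_trans le_sup_left this
  -- strict down-sets agree
  have hDm : ∀ i : ℕ, 1 ≤ i → i ≤ r →
      {x | x ∈ Cbar ∧ SLt x (d i)} = {x | x ∈ Cbar ∧ SLt x (c i)} := by
    intro i h1 hir
    have hfc : pushL (cbar i) ∈ SFace (AL (cbar i)) (cbar i) := (hAL (cbar i)).2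
    have hfd : pushL' (cbar i) ∈ SFace (AL' (cbar i)) (cbar i) := (hAL' (cbar i)).2
    have hAeq : AL (cbar i) = AL' (cbar i) := hequiv (cbar i) (hcbar i h1 hir).1.1
    have hceq : ∀ k ∈ AL (cbar i), c i k = cbar i k := by
      intro k hk
      rw [(hcpush i h1 hir).1]
      exact hfc.1 k hk
    have hdeq : ∀ k ∈ AL (cbar i), d i k = cbar i k := by
      intro k hk
      rw [hd i]
      exact hfd.1 k (hAeq ▸ hk)
    have hcgt : ∀ k ∉ AL (cbar i), cbar i k < c i k := by
      intro k hk
      have := hfc.2 k hk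
      rwa [(hcpush i h1 hir).1]
    have hdgt : ∀ k ∉ AL (cbar i), cbar i k < d i k := by
      intro k hk
      have := hfd.2 k (fun hc => hk (hAeq ▸ hc))
      rwa [hd i]
    ext x
    simp only [Set.mem_setOf_eq, and_congr_right_iff]
    intro hx
    constructor
    · intro h
      have hxcbar : x ≤ cbar i := (hdgreat i h1 hir).2 ⟨hx, slt_le h⟩
      intro k
      by_cases hk : k ∈ AL (cbar i)
      · rw [hceq k hk, ← hdeq k hk]; exact h k
      · exact lt_of_le_of_lt (hxcbar k) (hcgt k hk)
    · intro h
      have hxcbar : x ≤ cbar i := (hcbar i h1 hir).2 ⟨hx, slt_le h⟩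
      intro k
      by_cases hk : k ∈ AL (cbar i)
      · rw [hdeq k hk, ← hceq k hk]; exact h k
      · exact lt_of_le_of_lt (hxcbar k) (hdgt k hk)
  -- monotonicity of cbar and d
  have hcle : ∀ h k : ℕ, 1 ≤ h → h ≤ k → k ≤ r → c h ≤ c k := by
    intro h k h1 hhk hkr
    rcases eq_or_lt_of_le hhk with rfl | hlt
    · exact le_rfl
    · exact slt_le (hcmono h k h1 hlt hkr)
  have hcbarmono : ∀ h k : ℕ, 1 ≤ h → h ≤ k → k ≤ r → cbar h ≤ cbar k := by
    intro h k h1 hhk hkr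
    exact (hcbar k (h1.trans hhk) hkr).2
      ⟨(hcbar h h1 (hhk.trans hkr)).1.1,
        ((hcbar h h1 (hhk.trans hkr)).1.2).trans (hcle h k h1 hhk hkr)⟩
  have hdmono : ∀ h k : ℕ, 1 ≤ h → h ≤ k → k ≤ r → d h ≤ d k := by
    intro h k h1 hhk hkr
    rw [hd h, hd k]
    exact hpushL'mono (hcbarmono h k h1 hhk hkr)
  have hdslt : ∀ i j : ℕ, 1 ≤ i → i < j → j ≤ r → SLt (d i) (d j) := by
    intro i j h1 hij hjr
    have hir : i ≤ r := (hij.trans_le hjr).le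
    have hne : d i ≠ d j := by
      intro hEq
      have hpp : pushL' (cbar i) = pushL' (cbar j) := by rw [← hd i, ← hd j, hEq]
      have := hkey (cbar i) (cbar j) (hcbar i h1 hir).1.1
        (hcbar j (h1.trans hij.le) hjr).1.1 (hcbarmono i j h1 hij.le hjr) hpp
      rw [← (hcpush j (h1.trans hij.le) hjr).1, ← (hcpush i h1 hir).1] at this
      have hcij := hcmono i j h1 hij hjr ⟨0, hn⟩
      linarith [this ⟨0, hn⟩]
    exact posline_slt hn hL' (hdL' i) (hdL' j) (hdmono i j h1 hij.le hjr) hne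
  -- part 1
  have part1 : ∀ h k : ℕ, 1 ≤ h → h ≤ k → k ≤ r →
      rho M (c h) (c k) = rho M (d h) (d k) := by
    intro h k h1 hhk hkr
    have e1 : rho M (c h) (c k) = rho M (cbar h) (cbar k) :=
      rho_star M hstar (hcle h k h1 hhk hkr) (hcbar h h1 (hhk.trans hkr)) (hcbar k (h1.trans hhk) hkr)
    have e2 : rho M (d h) (d k) = rho M (cbar h) (cbar k) :=
      rho_star M hstar (hdmono h k h1 hhk hkr) (hdgreat h h1 (hhk.trans hkr))
        (hdgreat k (h1.trans hhk) hkr)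
    rw [e1, e2]
  refine ⟨part1, ?_, ?_⟩
  · -- multiplicities
    intro i j h1 hij hjr
    have hir : i ≤ r := (hij.trans_le hjr).le
    have hj1 : 1 ≤ j := h1.trans hij.le
    have hcij : SLt (c i) (c j) := hcmono i j h1 hij hjr
    have hdij : SLt (d i) (d j) := hdslt i j h1 hij hjr
    have hvmne : ∃ x ∈ Cbar, SLt x (c j) :=
      ⟨cbar i, (hcbar i h1 hir).1.1, fun k => lt_of_le_of_lt ((hcbar i h1 hir).1.2 k) (hcij k)⟩
    obtain ⟨vm, hvm⟩ := exists_greatest_aux Cbar hclosed (fun x => SLt x (c j))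
      (fun x y hx hy => sup_slt_both hx hy) hvmne
    have hvm' : IsGreatest {x | x ∈ Cbar ∧ SLt x (d j)} vm := by
      rw [hDm j hj1 hjr]; exact hvm
    rw [mu_formula M Cbar hclosed hstar (c i) (c j) (cbar i) (cbar j) vm
        {x | x ∈ Cbar ∧ SLt x (c i)} hcij (hcbar i h1 hir) (hcbar j hj1 hjr) hvm rfl,
      mu_formula M Cbar hclosed hstar (d i) (d j) (cbar i) (cbar j) vm
        {x | x ∈ Cbar ∧ SLt x (c i)} hdij (hdgreat i h1 hir) (hdgreat j hj1 hjr) hvm'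
        (hDm i h1 hir)]
  · -- multiplicities at infinity
    intro i h1 hir
    obtain ⟨c0, hc0⟩ := hCne
    obtain ⟨top0, htop0⟩ := exists_greatest_aux Cbar hclosed (fun _ => True)
      (fun _ _ _ _ => trivial) ⟨c0, hc0, trivial⟩
    have htop : top0 ∈ Cbar ∧ ∀ x ∈ Cbar, x ≤ top0 :=
      ⟨htop0.1.1, fun x hx => htop0.2 ⟨hx, trivial⟩⟩
    rw [muInf_formula M hn Cbar hclosed hstar (c i) (cbar i) top0
        {x | x ∈ Cbar ∧ SLt x (c i)} (hcbar i h1 hir) htop rfl,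
      muInf_formula M hn Cbar hclosed hstar (d i) (cbar i) top0
        {x | x ∈ Cbar ∧ SLt x (c i)} (hdgreat i h1 hir) htop (hDm i h1 hir)]
end
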